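/- Let D be a noncommutative division ring of characteristic 2, and let f, g : D → D be additive maps such that f(x) = g(x⁻¹) for all nonzero x ∈ D. Then f = 0 and g = 0. -/

import Mathlib

/-!
Hua's identity `(a - a b a)⁻¹ = a⁻¹ + (b⁻¹ - a)⁻¹` turns `f x = g x⁻¹` into
`f (a b a) = f a - g b`. Taking `b = 1` gives `f (x²) = f x - f 1` for `x ∉ {0, 1}`; polarizing,
the biadditive map `(x, y) ↦ f (x y + y x)` takes the constant value `f 1` at all pairs in general
position, and since a noncommutative division ring is infinite (Wedderburn) this forces `f 1 = 0`.
Hence `f (x²) = f x` and `f (x y + y x) = 0` everywhere, and expanding `f ((b + 1) x (b + 1))`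
in two ways gives `f x = 0`. Finally `g x = f x⁻¹ = 0`.
-/

open scoped Pointwise

theorem Set.Finite.exists_forall_add_notMem {G : Type*} [AddGroup G] [Infinite G] {s t : Set G}
    (hs : s.Finite) (ht : t.Finite) : ∃ y, ∀ c ∈ s, y + c ∉ t := by
  obtain ⟨y, hy⟩ := (ht.sub hs).exists_notMem
  exact ⟨y, fun c hc hyc => hy (by simpa using Set.sub_mem_sub hyc hc)⟩

theorem infinite_of_exists_mul_ne_mul {D : Type*} [DivisionRing D]
    (h : ∃ a b : D, a * b ≠ b * a) : Infinite D := by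
  by_contra hfin
  have := not_infinite_iff_finite.mp hfin
  obtain ⟨a, b, hab⟩ := h
  exact hab (mul_comm a b)

theorem inv_sub_ne_zero_of_mul_ne_one {D : Type*} [DivisionRing D] {a b : D} (hb : b ≠ 0)
    (hba : b * a ≠ 1) : b⁻¹ - a ≠ 0 := by
  rw [show b⁻¹ - a = b⁻¹ * (1 - b * a) by
    rw [mul_sub, mul_one, ← mul_assoc, inv_mul_cancel₀ hb, one_mul]]
  exact mul_ne_zero (inv_ne_zero hb) (sub_ne_zero.mpr (Ne.symm hba))

theorem hua_identity {D : Type*} [DivisionRing D] {a b : D} (ha : a ≠ 0) (hb : b ≠ 0)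
    (hba : b * a ≠ 1) : (a - a * b * a)⁻¹ = a⁻¹ + (b⁻¹ - a)⁻¹ := by
  have hne := inv_sub_ne_zero_of_mul_ne_one hb hba
  have hfac : a - a * b * a = a * b * (b⁻¹ - a) := by
    rw [mul_sub, mul_assoc a b b⁻¹, mul_inv_cancel₀ hb, mul_one]
  apply inv_eq_of_mul_eq_one_right
  calc (a - a * b * a) * (a⁻¹ + (b⁻¹ - a)⁻¹)
      = a * (b * b⁻¹) * a⁻¹ - a * b * (a * a⁻¹) + a * b * ((b⁻¹ - a) * (b⁻¹ - a)⁻¹) := by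
        rw [hfac]; noncomm_ring
    _ = 1 := by simp [ha, hb, hne]

theorem AddMonoidHom.map_add_mul_self {R : Type*} [NonUnitalNonAssocSemiring R] (f : R →+ R)
    (x y : R) :
    f ((x + y) * (x + y)) = f (x * x) + f (x * y + y * x) + f (y * y) := by
  rw [← map_add, ← map_add]
  congr 1
  noncomm_ring

def IsInvPair {D : Type*} [DivisionRing D] (f g : D →+ D) : Prop :=
  ∀ x : D, x ≠ 0 → f x = g x⁻¹

namespace IsInvPair

variable {D : Type*} [DivisionRing D] {f g : D →+ D}

theorem map_inv_eq (h : IsInvPair f g) {x : D} (hx : x ≠ 0) : f x⁻¹ = g x := by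
  rw [h _ (inv_ne_zero hx), inv_inv]

theorem map_mul_mul (h : IsInvPair f g) {a b : D} (ha : a ≠ 0) (hb : b ≠ 0) (hba : b * a ≠ 1) :
    f (a * b * a) = f a - g b := by
  have hne : a - a * b * a ≠ 0 := by
    rw [show a - a * b * a = a * (1 - b * a) by noncomm_ring]
    exact mul_ne_zero ha (sub_ne_zero.mpr (Ne.symm hba))
  have key : f (a - a * b * a) = g b := by
    rw [h _ hne, hua_identity ha hb hba, map_add, ← h a ha,
      ← h _ (inv_sub_ne_zero_of_mul_ne_one hb hba), map_sub, h.map_inv_eq hb]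
    abel
  rw [map_sub] at key
  rw [← key]; abel

theorem map_mul_self_of_ne (h : IsInvPair f g) {x : D} (hx₀ : x ≠ 0) (hx₁ : x ≠ 1) :
    f (x * x) = f x - f 1 := by
  rw [← inv_one, h.map_inv_eq one_ne_zero, ← h.map_mul_mul hx₀ one_ne_zero (by simpa), mul_one]

theorem map_mul_add_mul_of_notMem (h : IsInvPair f g) {x y : D} (hx : x ∉ ({0, 1} : Set D))
    (hy : y ∉ ({0, 1} : Set D)) (hxy : x + y ∉ ({0, 1} : Set D)) :
    f (x * y + y * x) = f 1 := by
  simp only [Set.mem_insert_iff, Set.mem_singleton_iff, not_or] at hx hy hxy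
  have := f.map_add_mul_self x y
  rw [h.map_mul_self_of_ne hx.1 hx.2, h.map_mul_self_of_ne hy.1 hy.2,
    h.map_mul_self_of_ne hxy.1 hxy.2, map_add] at this
  linear_combination (norm := abel) -this

variable [Infinite D]

theorem map_one (h : IsInvPair f g) : f 1 = 0 := by
  have hS := Set.toFinite ({0, 1} : Set D)
  obtain ⟨x, hx⟩ := hS.exists_notMem
  obtain ⟨y₁, hy₁⟩ := (Set.toFinite {0, x}).exists_forall_add_notMem hS
  obtain ⟨y₂, hy₂⟩ := (Set.toFinite {0, x, y₁, y₁ + x}).exists_forall_add_notMem hS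
  simp only [Set.mem_insert_iff, Set.mem_singleton_iff, forall_eq_or_imp, forall_eq,
    add_zero, ← add_assoc] at hy₁ hy₂
  have h₁ := h.map_mul_add_mul_of_notMem hy₁.1 hx hy₁.2
  have h₂ := h.map_mul_add_mul_of_notMem hy₂.1 hx hy₂.2.1
  have h₁₂ := h.map_mul_add_mul_of_notMem hy₂.2.2.1 hx hy₂.2.2.2
  rw [show (y₂ + y₁) * x + x * (y₂ + y₁) = (y₂ * x + x * y₂) + (y₁ * x + x * y₁) by noncomm_ring,
    map_add, h₁, h₂] at h₁₂
  simpa using h₁₂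

theorem map_mul_self (h : IsInvPair f g) (x : D) : f (x * x) = f x := by
  obtain rfl | hx₀ := eq_or_ne x 0
  · rw [mul_zero]
  obtain rfl | hx₁ := eq_or_ne x 1
  · rw [mul_one]
  rw [h.map_mul_self_of_ne hx₀ hx₁, h.map_one, sub_zero]

theorem map_mul_add_mul (h : IsInvPair f g) (x y : D) : f (x * y + y * x) = 0 := by
  have := f.map_add_mul_self x y
  rw [h.map_mul_self, h.map_mul_self, h.map_mul_self, map_add] at this
  linear_combination (norm := abel) -this

theorem left_eq_zero (h : IsInvPair f g) : f = 0 := by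
  ext x
  obtain rfl | hx := eq_or_ne x 0
  · exact map_zero f
  obtain ⟨b, hb⟩ := (Set.toFinite {0, 1}).exists_forall_add_notMem (Set.toFinite {0, x⁻¹})
  simp only [Set.mem_insert_iff, Set.mem_singleton_iff, forall_eq_or_imp, forall_eq,
    add_zero, not_or] at hb
  obtain ⟨⟨hb₀, hbx⟩, hb₁, hb₁x⟩ := hb
  have hxb {c : D} (hc : c ≠ x⁻¹) : x * c ≠ 1 := fun hxc => hc (eq_inv_of_mul_eq_one_right hxc)
  have := h.map_mul_mul hb₁ hx (hxb hb₁x)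
  rw [show (b + 1) * x * (b + 1) = b * x * b + (x * b + b * x) + x by noncomm_ring, map_add,
    map_add, h.map_mul_add_mul, h.map_mul_mul hb₀ hx (hxb hbx), map_add, h.map_one] at this
  simpa using this

theorem right_eq_zero (h : IsInvPair f g) : g = 0 := by
  ext x
  obtain rfl | hx := eq_or_ne x 0
  · exact map_zero g
  rw [← h.map_inv_eq hx, h.left_eq_zero, AddMonoidHom.zero_apply, AddMonoidHom.zero_apply]

end IsInvPair

theorem stmt_9_general {D : Type*} [DivisionRing D]
    (hnc : ∃ a b : D, a * b ≠ b * a)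
    (f g : D → D)
    (hf : ∀ x y : D, f (x + y) = f x + f y)
    (hg : ∀ x y : D, g (x + y) = g x + g y)
    (h : ∀ x : D, x ≠ 0 → f x = g x⁻¹) :
    f = 0 ∧ g = 0 := by
  have := infinite_of_exists_mul_ne_mul hnc
  have hfg : IsInvPair (AddMonoidHom.mk' f hf) (AddMonoidHom.mk' g hg) := h
  exact ⟨congrArg DFunLike.coe hfg.left_eq_zero, congrArg DFunLike.coe hfg.right_eq_zero⟩

theorem stmt_9 {D : Type*} [DivisionRing D] [CharP D 2]
    (hnc : ∃ a b : D, a * b ≠ b * a)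
    (f g : D → D)
    (hf : ∀ x y : D, f (x + y) = f x + f y)
    (hg : ∀ x y : D, g (x + y) = g x + g y)
    (h : ∀ x : D, x ≠ 0 → f x = g x⁻¹) :
    f = 0 ∧ g = 0 :=
  stmt_9_general hnc f g hf hg h
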